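/- arXiv:2412.10583 — 2 statements merged into one kernel-verified Lean document; each statement's English description precedes it below -/
import Mathlib

section
/- Let M ∈ ℝ^{l×n×p} be such that M∗M^⊤ is t-invertible. Then ‖bcirc(M^⊤ ∗ (M∗M^⊤)^{-1})‖_F² ≤ l·p·‖(bcirc(M)·bcirc(M)^⊤)^{-1}‖₂, where ‖·‖_F is the matrix Frobenius norm and ‖·‖₂ the spectral norm. (Since bcirc(M) has full row rank, ‖(bcirc(M)bcirc(M)^⊤)^{-1}‖₂ equals σ_{min+}^{-2}(bcirc(M)), the inverse square of the smallest positive singular value of bcirc(M).) -/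
open Matrix
open scoped BigOperators

/-- A real third-order tensor with row index `I`, column index `J`, and `p` frontal slices. -/
abbrev Tensor (I J : Type*) (p : ℕ) := I → J → Fin p → ℝ

namespace Tensor

variable {I J K : Type*} {p : ℕ}

/-- Block-circulant matricization: `bcirc A [(i,k),(j,l)] = A i j ((k - l) mod p)`. -/
def bcirc (A : Tensor I J p) : Matrix (I × Fin p) (J × Fin p) ℝ :=
  Matrix.of fun ik jl => A ik.1 jl.1 (ik.2 - jl.2)

/-- Unfolding along the second mode: `unfold B [(j,k), i] = B j i k`. -/
def unfold {S : Type*} (B : Tensor J S p) : Matrix (J × Fin p) S ℝ :=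
  Matrix.of fun jk s => B jk.1 s jk.2

/-- The t-product, the unique tensor with `unfold (A ∗ B) = bcirc A * unfold B`. -/
def tprod [Fintype J] (A : Tensor I J p) (B : Tensor J K p) : Tensor I K p :=
  fun i s k => ∑ j : J, ∑ l : Fin p, A i j (k - l) * B j s l

/-- Tensor transpose: `Aᵀ j i k = A i j ((-k) mod p)`. -/
def ttrans (A : Tensor I J p) : Tensor J I p := fun j i k => A i j (-k)

/-- The identity tensor: first frontal slice is the identity, the others are zero. -/
def tid (I : Type*) [DecidableEq I] (p : ℕ) : Tensor I I p :=
  fun i j k => if i = j ∧ (k : ℕ) = 0 then 1 else 0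

/-- t-invertibility of a square tensor. -/
def TInvertible [Fintype I] [DecidableEq I] (S : Tensor I I p) : Prop :=
  ∃ T : Tensor I I p, tprod S T = tid I p ∧ tprod T S = tid I p

open Classical in
/-- The t-inverse of a square tensor (junk value when not t-invertible). -/
noncomputable def tinv [Fintype I] [DecidableEq I] (S : Tensor I I p) : Tensor I I p :=
  if h : TInvertible S then h.choose else 0

/-- The projection tensor `P_M = Mᵀ ∗ (M ∗ Mᵀ)⁻¹ ∗ M`. -/
noncomputable def proj [Fintype I] [DecidableEq I] [Fintype J] (M : Tensor I J p) :
    Tensor J J p :=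
  tprod (ttrans M) (tprod (tinv (tprod M (ttrans M))) M)

/-- The projection tensor `P_{Mᵀ} = M ∗ (Mᵀ ∗ M)⁻¹ ∗ Mᵀ`. -/
noncomputable def projT [Fintype I] [Fintype J] [DecidableEq J] (M : Tensor I J p) :
    Tensor I I p :=
  tprod M (tprod (tinv (tprod (ttrans M) M)) (ttrans M))

/-- The Frobenius inner product of two tensors. -/
def tinner [Fintype I] [Fintype J] (A B : Tensor I J p) : ℝ :=
  ∑ i : I, ∑ j : J, ∑ k : Fin p, A i j k * B i j k

/-- The squared Frobenius norm of a tensor. -/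
def frobSq [Fintype I] [Fintype J] (A : Tensor I J p) : ℝ :=
  ∑ i : I, ∑ j : J, ∑ k : Fin p, (A i j k) ^ 2

/-- The Frobenius norm of a tensor. -/
noncomputable def frobNorm [Fintype I] [Fintype J] (A : Tensor I J p) : ℝ :=
  Real.sqrt (frobSq A)

/-- The subtensor of the row slices of `U` indexed by `μ`. -/
def rowSub (U : Tensor I J p) (μ : Finset I) : Tensor {i // i ∈ μ} J p :=
  fun i => U i.1

/-- The `j`-th lateral slice of `U`, as an `I × 1 × p` tensor. -/
def latSlice (U : Tensor I J p) (j : J) : Tensor I (Fin 1) p :=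
  fun i _ k => U i j k

/-- One (block) Kaczmarz step for the system with operator `U`, sampled row block `μ`,
current iterate `X` and measurement block `Bμ`:
`X ← X - U_μᵀ ∗ (U_μ ∗ U_μᵀ)⁻¹ ∗ (U_μ ∗ X - Bμ)`. -/
noncomputable def kaczStep [DecidableEq I] [Fintype J] (U : Tensor I J p) (μ : Finset I)
    (X : Tensor J K p) (Bμ : Tensor {i // i ∈ μ} K p) : Tensor J K p :=
  X - tprod (ttrans (rowSub U μ))
    (tprod (tinv (tprod (rowSub U μ) (ttrans (rowSub U μ))))
      (tprod (rowSub U μ) X - Bμ))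

/-- One extended (column-like) step:
`W ← W - U_{:j:} ∗ (U_{:j:}ᵀ ∗ U_{:j:})⁻¹ ∗ (U_{:j:}ᵀ ∗ W)`. -/
noncomputable def extStep [Fintype I] (U : Tensor I J p) (j : J) (W : Tensor I K p) :
    Tensor I K p :=
  W - tprod (latSlice U j)
    (tprod (tinv (tprod (ttrans (latSlice U j)) (latSlice U j)))
      (tprod (ttrans (latSlice U j)) W))

end Tensor

/-- Squared Frobenius norm of a real matrix. -/
def matFrobSq {I J : Type*} [Fintype I] [Fintype J] (A : Matrix I J ℝ) : ℝ :=
  ∑ i : I, ∑ j : J, (A i j) ^ 2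

/-- Spectral norm (largest singular value) of a real matrix, as the supremum of `‖A x‖`
over unit vectors `x`. -/
noncomputable def specNorm {I J : Type*} [Fintype I] [Fintype J] (A : Matrix I J ℝ) : ℝ :=
  sSup {r : ℝ | ∃ x : J → ℝ, (∑ j : J, (x j) ^ 2) = 1 ∧
    r = Real.sqrt (∑ i : I, (A.mulVec x i) ^ 2)}

/-- Smallest eigenvalue of a symmetric real matrix, via the Rayleigh quotient:
`σ_min(S) = inf {xᵀ S x : ‖x‖ = 1}`. -/
noncomputable def minEig {I : Type*} [Fintype I] (S : Matrix I I ℝ) : ℝ :=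
  sInf {r : ℝ | ∃ x : I → ℝ, (∑ i : I, (x i) ^ 2) = 1 ∧
    r = ∑ i : I, x i * S.mulVec x i}

/-!
`bcirc` turns t-products into matrix products, transposes into transposes and t-inverses into
inverses, so with `A = bcirc M` and `H = (A Aᵀ)⁻¹` the matrix in question is `Aᵀ H`. Its squared
Frobenius norm is `tr (Hᵀ A Aᵀ H) = tr H`, and every diagonal entry of `H` is at most `‖H‖₂`
(test `H` against a standard basis vector), so `tr H ≤ l p ‖H‖₂`.
-/

namespace Tensor

variable {I J K : Type*} {p : ℕ}

lemma bcirc_tprod [Fintype J] (A : Tensor I J p) (B : Tensor J K p) :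
    bcirc (tprod A B) = bcirc A * bcirc B := by
  ext ⟨i, k⟩ ⟨s, m⟩
  have : NeZero p := ⟨fun hp => (hp ▸ k).elim0⟩
  simp only [bcirc, tprod, Matrix.mul_apply, Matrix.of_apply, Fintype.sum_prod_type]
  refine Finset.sum_congr rfl fun j _ => ?_
  refine Fintype.sum_equiv (Equiv.addRight m) _ _ fun x => ?_
  simp [sub_sub, add_comm m x]

lemma bcirc_ttrans (A : Tensor I J p) : bcirc (ttrans A) = (bcirc A)ᵀ := by
  ext ⟨j, l⟩ ⟨i, k⟩
  have : NeZero p := ⟨fun hp => (hp ▸ k).elim0⟩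
  simp [bcirc, ttrans, neg_sub]

lemma bcirc_tid [DecidableEq I] : bcirc (tid I p) = 1 := by
  ext ⟨i, k⟩ ⟨j, m⟩
  have : NeZero p := ⟨fun hp => (hp ▸ k).elim0⟩
  simp [bcirc, tid, Matrix.one_apply, Prod.ext_iff, sub_eq_zero]

section Invertible

variable [Fintype I] [DecidableEq I] {S : Tensor I I p}

lemma bcirc_mul_bcirc_tinv (hS : TInvertible S) : bcirc S * bcirc (tinv S) = 1 := by
  rw [← bcirc_tprod, tinv, dif_pos hS, hS.choose_spec.1, bcirc_tid]

lemma bcirc_tinv (hS : TInvertible S) : bcirc (tinv S) = (bcirc S)⁻¹ :=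
  (inv_eq_right_inv (bcirc_mul_bcirc_tinv hS)).symm

lemma isUnit_det_bcirc (hS : TInvertible S) : IsUnit (bcirc S).det :=
  isUnit_det_of_right_inverse (bcirc_mul_bcirc_tinv hS)

end Invertible

end Tensor

section MatrixNorms

variable {I J : Type*} [Fintype I] [Fintype J]

lemma matFrobSq_eq_trace (A : Matrix I J ℝ) : matFrobSq A = trace (Aᵀ * A) := by
  simp only [matFrobSq, trace, diag, mul_apply, transpose_apply, sq]
  exact Finset.sum_comm

lemma matFrobSq_transpose_mul_inv [DecidableEq I] {A : Matrix I J ℝ}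
    (hA : IsUnit (A * Aᵀ).det) : matFrobSq (Aᵀ * (A * Aᵀ)⁻¹) = trace (A * Aᵀ)⁻¹ := by
  have hgram : (Aᵀ * (A * Aᵀ)⁻¹)ᵀ * (Aᵀ * (A * Aᵀ)⁻¹) = ((A * Aᵀ)⁻¹)ᵀ := by
    rw [transpose_mul, transpose_transpose, Matrix.mul_assoc, ← Matrix.mul_assoc A,
      mul_nonsing_inv _ hA, Matrix.mul_one]
  rw [matFrobSq_eq_trace, hgram, trace_transpose]

lemma specNorm_set_bddAbove (A : Matrix I J ℝ) :
    BddAbove {r : ℝ | ∃ x : J → ℝ, (∑ j : J, (x j) ^ 2) = 1 ∧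
      r = Real.sqrt (∑ i : I, (A.mulVec x i) ^ 2)} := by
  refine ⟨Real.sqrt (matFrobSq A), fun r ⟨x, hx, hr⟩ => hr ▸ Real.sqrt_le_sqrt ?_⟩
  refine Finset.sum_le_sum fun i _ => ?_
  simpa [mulVec, dotProduct, hx] using Finset.sum_mul_sq_le_sq_mul_sq Finset.univ (A i) x

lemma diag_le_specNorm [DecidableEq I] (A : Matrix I I ℝ) (c : I) : A c c ≤ specNorm A := by
  have hsingle : (∑ j : I, (Pi.single c (1 : ℝ) : I → ℝ) j ^ 2) = 1 := by
    simp [Pi.single_apply, ite_pow]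
  have hcol : ∀ i, A.mulVec (Pi.single c 1) i = A i c := by
    simp [mulVec_single]
  calc A c c ≤ Real.sqrt (A c c ^ 2) := by rw [Real.sqrt_sq_eq_abs]; exact le_abs_self _
    _ ≤ Real.sqrt (∑ i : I, (A.mulVec (Pi.single c 1) i) ^ 2) := by
      simp only [hcol]
      exact Real.sqrt_le_sqrt (Finset.single_le_sum (fun i _ => sq_nonneg (A i c))
        (Finset.mem_univ c))
    _ ≤ specNorm A := le_csSup (specNorm_set_bddAbove A) ⟨_, hsingle, rfl⟩

lemma trace_le_card_mul_specNorm [DecidableEq I] (A : Matrix I I ℝ) :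
    trace A ≤ Fintype.card I * specNorm A := by
  calc trace A ≤ ∑ _c : I, specNorm A := Finset.sum_le_sum fun c _ => diag_le_specNorm A c
    _ = Fintype.card I * specNorm A := by simp

end MatrixNorms

open Tensor in
/-- `‖bcirc(Mᵀ ∗ (M∗Mᵀ)⁻¹)‖_F² ≤ l⬝p⬝‖(bcirc(M) bcirc(M)ᵀ)⁻¹‖₂`. -/
theorem stmt4 {l n p : ℕ} (M : Tensor (Fin l) (Fin n) p)
    (h : TInvertible (tprod M (ttrans M))) :
    matFrobSq (bcirc (tprod (ttrans M) (tinv (tprod M (ttrans M))))) ≤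
      (l : ℝ) * p * specNorm ((bcirc M * (bcirc M)ᵀ)⁻¹) := by
  have hgram : bcirc (tprod M (ttrans M)) = bcirc M * (bcirc M)ᵀ := by
    rw [bcirc_tprod, bcirc_ttrans]
  have hunit : IsUnit (bcirc M * (bcirc M)ᵀ).det := hgram ▸ isUnit_det_bcirc h
  rw [bcirc_tprod, bcirc_ttrans, bcirc_tinv h, hgram, matFrobSq_transpose_mul_inv hunit]
  simpa [mul_comm] using trace_le_card_mul_specNorm ((bcirc M * (bcirc M)ᵀ)⁻¹)
end

section
/- Let U ∈ ℝ^{m×m₁×p}, let μ ⊆ {1,…,m} be a nonempty subset such that U_μ∗U_μ^⊤ is t-invertible, and let X, X‡ ∈ ℝ^{m₁×l×p}, Y, E ∈ ℝ^{m×l×p} with U∗X‡ = Y. Define the Kaczmarz update X⁺ = X − U_μ^⊤ ∗ (U_μ∗U_μ^⊤)^{-1} ∗ (U_μ∗X − Y_μ − E_μ). Then X⁺ − X‡ = (X − X‡) − P_{U_μ}∗(X − X‡) + U_μ^⊤∗(U_μ∗U_μ^⊤)^{-1}∗E_μ, and consequently ‖X⁺ − X‡‖_F² = ‖(X − X‡)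 − P_{U_μ}∗(X − X‡)‖_F² + ‖U_μ^⊤∗(U_μ∗U_μ^⊤)^{-1}∗E_μ‖_F². -/
open Matrix
open scoped BigOperators

namespace Tensor

variable {I J K L : Type*} {p : ℕ}

lemma sum_nest4' {α β γ δ : Type*} [Fintype α] [Fintype β] [Fintype γ] [Fintype δ]
    (f : α → β → γ → δ → ℝ) :
    (∑ a : α, ∑ b : β, ∑ c : γ, ∑ d : δ, f a b c d)
      = ∑ x : α × β × γ × δ, f x.1 x.2.1 x.2.2.1 x.2.2.2 := by
  simp [Fintype.sum_prod_type]

lemma sum_nest5' {α β γ δ ε : Type*} [Fintype α] [Fintype β] [Fintype γ] [Fintype δ] [Fintype ε]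
    (f : α → β → γ → δ → ε → ℝ) :
    (∑ a : α, ∑ b : β, ∑ c : γ, ∑ d : δ, ∑ e : ε, f a b c d e)
      = ∑ x : α × β × γ × δ × ε, f x.1 x.2.1 x.2.2.1 x.2.2.2.1 x.2.2.2.2 := by
  simp [Fintype.sum_prod_type]

lemma tprod_sub' [Fintype J] (A : Tensor I J p) (B C : Tensor J K p) :
    tprod A (B - C) = tprod A B - tprod A C := by
  funext i s k
  simp [tprod, Finset.sum_sub_distrib, mul_sub]

lemma tprod_tid_left' [Fintype J] [DecidableEq J] (B : Tensor J K p) :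
    tprod (tid J p) B = B := by
  funext i s k
  rcases Nat.eq_zero_or_pos p with hp | hp
  · subst hp; exact k.elim0
  haveI : NeZero p := ⟨hp.ne'⟩
  have hk : ∀ l : Fin p, ((k - l : Fin p) : ℕ) = 0 ↔ l = k := by
    intro l
    rw [show (0 : ℕ) = ((0 : Fin p) : ℕ) from rfl, ← Fin.ext_iff, sub_eq_zero, eq_comm]
  simp [tprod, tid, hk, ite_and]

lemma tprod_assoc' [Fintype J] [Fintype K] (A : Tensor I J p) (B : Tensor J K p)
    (C : Tensor K L p) : tprod (tprod A B) C = tprod A (tprod B C) := by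
  funext i s k
  rcases Nat.eq_zero_or_pos p with hp | hp
  · subst hp; exact k.elim0
  haveI : NeZero p := ⟨hp.ne'⟩
  simp only [tprod, Finset.sum_mul, Finset.mul_sum]
  rw [sum_nest4' (fun t r j l => A i j (k - r - l) * B j t l * C t s r),
    sum_nest4' (fun j l t r => A i j (k - l) * (B j t (l - r) * C t s r))]
  refine Fintype.sum_equiv
    (⟨fun x => (x.2.2.1, x.2.2.2 + x.2.1, x.1, x.2.1),
      fun y => (y.2.2.1, y.2.2.2, y.1, y.2.1 - y.2.2.2),
      fun ⟨t, r, j, l⟩ => by simp,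
      fun ⟨j, l, t, r⟩ => by simp⟩ :
      (K × Fin p × J × Fin p) ≃ (J × Fin p × K × Fin p)) _ _ fun x => ?_
  obtain ⟨t, r, j, l⟩ := x
  simp only [Equiv.coe_fn_mk, add_sub_cancel_right]
  rw [sub_sub, add_comm (l : Fin p) r, ← sub_sub, mul_assoc]

lemma tinner_ttrans' [Fintype I] [Fintype J] [Fintype K] (M : Tensor I J p)
    (A : Tensor J K p) (Z : Tensor I K p) :
    tinner A (tprod (ttrans M) Z) = tinner (tprod M A) Z := by
  rcases Nat.eq_zero_or_pos p with hp | hp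
  · subst hp; simp [tinner]
  haveI : NeZero p := ⟨hp.ne'⟩
  simp only [tinner, tprod, ttrans, Finset.sum_mul, Finset.mul_sum, neg_sub]
  rw [sum_nest5' (fun j s k i l => A j s k * (M i j (l - k) * Z i s l)),
    sum_nest5' (fun i s l j k => M i j (l - k) * A j s k * Z i s l)]
  refine Fintype.sum_equiv
    (⟨fun x => (x.2.2.2.1, x.2.1, x.2.2.2.2, x.1, x.2.2.1),
      fun y => (y.2.2.2.1, y.2.1, y.2.2.2.2, y.1, y.2.2.1),
      fun x => rfl, fun y => rfl⟩ :
      (J × K × Fin p × I × Fin p) ≃ (I × K × Fin p × J × Fin p)) _ _ fun x => ?_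
  obtain ⟨j, s, k, i, l⟩ := x
  simp only [Equiv.coe_fn_mk]
  ring

lemma frobSq_add' [Fintype I] [Fintype J] (A B : Tensor I J p) :
    frobSq (A + B) = frobSq A + 2 * tinner A B + frobSq B := by
  simp [frobSq, tinner, Pi.add_apply, add_sq, Finset.sum_add_distrib, Finset.mul_sum, mul_assoc]

lemma tprod_tinv_right' [Fintype I] [DecidableEq I] {S : Tensor I I p} (h : TInvertible S) :
    tprod S (tinv S) = tid I p := by
  rw [tinv, dif_pos h]
  exact h.choose_spec.1

end Tensor



open Tensor in
/-- error decomposition of one noisy block Kaczmarz step, with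
`X⁺ = X − U_μᵀ ∗ (U_μ∗U_μᵀ)⁻¹ ∗ (U_μ∗X − Y_μ − E_μ)` and `U∗X‡ = Y`:
`X⁺ − X‡ = (X − X‡) − P_{U_μ}∗(X − X‡) + U_μᵀ∗(U_μ∗U_μᵀ)⁻¹∗E_μ` and the
corresponding Pythagorean identity of squared Frobenius norms. -/
theorem stmt5 {m m₁ l p : ℕ} (U : Tensor (Fin m) (Fin m₁) p)
    (μ : Finset (Fin m)) (hμ : μ.Nonempty)
    (hinv : TInvertible (tprod (rowSub U μ) (ttrans (rowSub U μ))))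
    (X Xd : Tensor (Fin m₁) (Fin l) p) (Y E : Tensor (Fin m) (Fin l) p)
    (hY : tprod U Xd = Y) :
    kaczStep U μ X (rowSub Y μ + rowSub E μ) - Xd =
      (X - Xd) - tprod (proj (rowSub U μ)) (X - Xd) +
        tprod (ttrans (rowSub U μ))
          (tprod (tinv (tprod (rowSub U μ) (ttrans (rowSub U μ)))) (rowSub E μ)) ∧
    frobSq (kaczStep U μ X (rowSub Y μ + rowSub E μ) - Xd) =
      frobSq ((X - Xd) - tprod (proj (rowSub U μ)) (X - Xd)) +
        frobSq (tprod (ttrans (rowSub U μ))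
          (tprod (tinv (tprod (rowSub U μ) (ttrans (rowSub U μ)))) (rowSub E μ)))  := by
  classical
  set M := rowSub U μ with hM
  set S := tprod M (ttrans M) with hS
  set Si := tinv S with hSi
  set W := X - Xd with hW
  have hYμ : rowSub Y μ = tprod M Xd := by
    rw [hM, ← hY]; rfl
  have hres : tprod M X - (rowSub Y μ + rowSub E μ) = tprod M W - rowSub E μ := by
    rw [hYμ, hW, tprod_sub']
    abel
  have hSSi : tprod S Si = tid _ p := tprod_tinv_right' hinv
  have hproj : tprod (proj M) W = tprod (ttrans M) (tprod Si (tprod M W)) := by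
    rw [proj, tprod_assoc', tprod_assoc']
  have h1 : kaczStep U μ X (rowSub Y μ + rowSub E μ) - Xd =
      W - tprod (proj M) W + tprod (ttrans M) (tprod Si (rowSub E μ)) := by
    rw [kaczStep, hres, tprod_sub' Si, tprod_sub' (ttrans M), hproj, hW]
    abel
  have hMA : tprod M (W - tprod (proj M) W) = 0 := by
    rw [tprod_sub', hproj, ← tprod_assoc' M (ttrans M), ← hS,
      ← tprod_assoc' S Si, hSSi, tprod_tid_left', sub_self]
  have horth : tinner (W - tprod (proj M) W)
      (tprod (ttrans M) (tprod Si (rowSub E μ))) = 0 := by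
    rw [tinner_ttrans', hMA]
    simp [tinner]
  refine ⟨h1, ?_⟩
  rw [h1, frobSq_add', horth]
  ring
end
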